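/- Assume K'/k is a Galois subextension of K/k. Let α' ∈ K' ⊗_k K' and let α be its image in K ⊗_k K under the natural map. Then φ(α) = φ^{K'/k}(α') ∘ tr_{K/K'} as maps K → K; that is, φ(α)(z) = φ^{K'/k}(α')(tr_{K/K'}(z)) for all z ∈ K. -/

import Mathlib

set_option synthInstance.maxHeartbeats 1000000
set_option maxHeartbeats 1000000

open scoped TensorProduct

noncomputable section

/-- A normalized additive discrete valuation turning `K` into a complete discrete
valuation field (the value at `0` is junk). -/
structure CDVF (K : Type) [Field K] where
  v : K → ℤ
  v_mul : ∀ {x y : K}, x ≠ 0 → y ≠ 0 → v (x * y) = v x + v y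
  v_add : ∀ {x y : K}, x ≠ 0 → y ≠ 0 → x + y ≠ 0 → min (v x) (v y) ≤ v (x + y)
  v_one : v 1 = 0
  exists_uniformizer : ∃ x : K, x ≠ 0 ∧ v x = 1
  complete : ∀ f : ℕ → K,
    (∀ N : ℤ, ∃ M : ℕ, ∀ i ≥ M, ∀ j ≥ M, f i = f j ∨ N ≤ v (f i - f j)) →
    ∃ x : K, ∀ N : ℤ, ∃ M : ℕ, ∀ i ≥ M, f i = x ∨ N ≤ v (f i - x)

namespace CDVF

variable {K : Type} [Field K] (S : CDVF K)

/-- The ring of integers of a complete discrete valuation field. -/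
def O : Subring K where
  carrier := {x : K | x = 0 ∨ 0 ≤ S.v x}
  zero_mem' := Or.inl rfl
  one_mem' := Or.inr S.v_one.ge
  mul_mem' := by
    rintro x y hx hy
    rcases eq_or_ne x 0 with rfl | hx0
    · exact Or.inl (zero_mul _)
    rcases eq_or_ne y 0 with rfl | hy0
    · exact Or.inl (mul_zero _)
    · refine Or.inr ?_
      rw [S.v_mul hx0 hy0]
      have h1 := hx.resolve_left hx0
      have h2 := hy.resolve_left hy0
      omega
  add_mem' := by
    rintro x y hx hy
    rcases eq_or_ne x 0 with rfl | hx0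
    · simpa using hy
    rcases eq_or_ne y 0 with rfl | hy0
    · simpa using hx
    rcases eq_or_ne (x + y) 0 with h | h
    · exact Or.inl h
    · refine Or.inr ?_
      have h3 := S.v_add hx0 hy0 h
      have h1 := hx.resolve_left hx0
      have h2 := hy.resolve_left hy0
      omega
  neg_mem' := by
    rintro x hx
    rcases eq_or_ne x 0 with rfl | hx0
    · simp
    · refine Or.inr ?_
      have hn : S.v (-x) = S.v x := by
        have h1 : (-1 : K) ≠ 0 := by simp
        have e : (-1 : K) * (-1) = 1 := by ring
        have h2 := S.v_mul (x := (-1 : K)) (y := (-1 : K)) h1 h1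
        rw [e, S.v_one] at h2
        have h3 := S.v_mul (x := (-1 : K)) (y := x) h1 hx0
        rw [neg_one_mul] at h3
        omega
      rw [hn]
      exact hx.resolve_left hx0

/-- The maximal ideal of the ring of integers. -/
def mIdeal : Ideal S.O where
  carrier := {x : S.O | (x : K) = 0 ∨ 1 ≤ S.v (x : K)}
  zero_mem' := Or.inl rfl
  add_mem' := by
    rintro x y hx hy
    rcases eq_or_ne ((x : K)) 0 with h1 | h1
    · have : ((x + y : S.O) : K) = (y : K) := by push_cast [h1]; ring
      rw [Set.mem_setOf_eq, this]; exact hy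
    rcases eq_or_ne ((y : K)) 0 with h2 | h2
    · have : ((x + y : S.O) : K) = (x : K) := by push_cast [h2]; ring
      rw [Set.mem_setOf_eq, this]; exact hx
    rcases eq_or_ne ((x : K) + (y : K)) 0 with h | h
    · exact Or.inl (by push_cast; exact h)
    · refine Or.inr ?_
      have h3 := S.v_add h1 h2 h
      have hx' := hx.resolve_left h1
      have hy' := hy.resolve_left h2
      have : ((x + y : S.O) : K) = (x : K) + (y : K) := by push_cast; ring
      rw [this]
      omega
  smul_mem' := by
    rintro c x hx
    rcases eq_or_ne ((c : K)) 0 with h1 | h1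
    · exact Or.inl (by push_cast [smul_eq_mul, h1]; ring)
    rcases eq_or_ne ((x : K)) 0 with h2 | h2
    · exact Or.inl (by push_cast [smul_eq_mul, h2]; ring)
    · refine Or.inr ?_
      have hc : (c : K) = 0 ∨ 0 ≤ S.v (c : K) := c.2
      have hc' := hc.resolve_left h1
      have hx' := hx.resolve_left h2
      have : ((c • x : S.O) : K) = (c : K) * (x : K) := by push_cast [smul_eq_mul]; ring
      rw [this, S.v_mul h1 h2]
      omega

/-- The residue field (as a quotient ring). -/
abbrev Residue : Type := S.O ⧸ S.mIdeal

open Classical in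
/-- Reduction map `O_K → k̄`, extended by (junk) zero outside of `O_K`. -/
def redK (x : K) : S.Residue :=
  if h : x ∈ S.O then Ideal.Quotient.mk S.mIdeal ⟨x, h⟩ else 0

/-- The ring `R = k̄[X]/(X^n - 1)`. -/
abbrev Rring (n : ℕ) : Type :=
  Polynomial S.Residue ⧸ Ideal.span {(Polynomial.X : Polynomial S.Residue) ^ n - 1}

/-- The class of the variable `X` in `R`. -/
instance instIsTwoSidedRring (n : ℕ) :
    (Ideal.span {(Polynomial.X : Polynomial S.Residue) ^ n - 1}).IsTwoSided :=
  ⟨fun {a} b ha => by convert Ideal.mul_mem_left _ b ha using 1; ring⟩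

def mkX (n : ℕ) : S.Rring n :=
  Ideal.Quotient.mk _ Polynomial.X

instance instAlgebraResidueRring (n : ℕ) : Algebra S.Residue (S.Rring n) :=
  Ideal.Quotient.algebra _

instance instModuleResidueRring (n : ℕ) : Module S.Residue (S.Rring n) :=
  Algebra.toModule

end CDVF

/-- A totally ramified extension `K/k` of complete discrete valuation fields,
where `v` is the normalized valuation of `K`. -/
structure TotallyRamified (k K : Type) [Field k] [Field K] [Algebra k K]
    extends CDVF K where
  finiteDim : FiniteDimensional k K
  val_dvd : ∀ x : k, x ≠ 0 →
    (Module.finrank k K : ℤ) ∣ toCDVF.v (algebraMap k K x)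
  exists_base_uniformizer : ∃ x : k, x ≠ 0 ∧
    toCDVF.v (algebraMap k K x) = (Module.finrank k K : ℤ)
  residue_trivial : ∀ x : K, (x = 0 ∨ 0 ≤ toCDVF.v x) →
    ∃ y : k, x - algebraMap k K y = 0 ∨ 1 ≤ toCDVF.v (x - algebraMap k K y)

/-- A totally ramified extension together with its ramification depth `d`;
`d` is characterized by the property that the codifferent of `K/k`
(the trace-dual of `O_K`) equals `𝔪^(1-d-n)`, i.e. `d = v(different) - n + 1`. -/
structure TotallyRamifiedD (k K : Type) [Field k] [Field K] [Algebra k K]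
    extends TotallyRamified k K where
  depth : ℤ
  depth_spec : ∀ x : K,
    (∀ y : K, (y = 0 ∨ 0 ≤ toCDVF.v y) →
      (Algebra.trace k K (x * y) = 0 ∨
        0 ≤ toCDVF.v (algebraMap k K (Algebra.trace k K (x * y))))) ↔
    (x = 0 ∨ 1 - depth - (Module.finrank k K : ℤ) ≤ toCDVF.v x)

section GaloisModules

variable (k : Type) {K : Type} [Field k] [Field K] [Algebra k K]

/-- The action of the group algebra `K[G]` on `K`: `(Σ a_σ σ)(x) = Σ a_σ σ(x)`. -/
def applyGA (f : MonoidAlgebra K (K ≃ₐ[k] K)) (x : K) : K :=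
  f.coeff.sum fun σ a => a * σ x

/-- The filtration module `C_i ⊆ K[G]`. -/
def CfilGA (S : CDVF K) (i : ℤ) : Set (MonoidAlgebra K (K ≃ₐ[k] K)) :=
  {f | ∀ x : K, x ≠ 0 → applyGA k f x = 0 ∨ S.v x + i ≤ S.v (applyGA k f x)}

/-- `f ∈ K[G]` has all its coefficients in (the image of) `k₀`. -/
def coeffsIn (k₀ : Type) [CommRing k₀] [Algebra k₀ K]
    (f : MonoidAlgebra K (K ≃ₐ[k] K)) : Prop :=
  ∀ σ : K ≃ₐ[k] K, ∃ c : k₀, f.coeff σ = algebraMap k₀ K c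

/-- The `k₀`-submodule `k₀[G] ⊆ K[G]`. -/
def baseSub (k₀ : Type) [Field k₀] [Algebra k₀ K] :
    Submodule k₀ (MonoidAlgebra K (K ≃ₐ[k] K)) where
  carrier := {f | coeffsIn k k₀ f}
  zero_mem' := by intro σ; exact ⟨0, by simp⟩
  add_mem' := by
    intro f g hf hg σ
    obtain ⟨c, hc⟩ := hf σ
    obtain ⟨d, hd⟩ := hg σ
    refine ⟨c + d, ?_⟩
    rw [map_add, ← hc, ← hd]
    exact Finsupp.add_apply f.coeff g.coeff σ
  smul_mem' := by
    intro a f hf σ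
    obtain ⟨c, hc⟩ := hf σ
    refine ⟨a * c, ?_⟩
    rw [MonoidAlgebra.coeff_smul_apply, hc, map_mul, Algebra.smul_def]

/-- `d(f)`: the unique integer `i` with `f ∈ C_{i+d} ∖ C_{i+d+1}` (junk value if
no such integer exists). -/
def dOfGA (S : TotallyRamifiedD k K) (f : MonoidAlgebra K (K ≃ₐ[k] K)) : ℤ :=
  Classical.epsilon fun i : ℤ =>
    f ∈ CfilGA k S.toCDVF (i + S.depth) ∧ f ∉ CfilGA k S.toCDVF (i + S.depth + 1)

/-- The map `p_i : C_i → R = k̄[X]/(X^n-1)`,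
`p_i(f) = r(c_π)⁻¹ Σ_j r(f(π^{j-i})/π^j) X^j` (junk outside `C_i`). -/
def pGA (S : TotallyRamifiedD k K) (π : K) (i : ℤ)
    (f : MonoidAlgebra K (K ≃ₐ[k] K)) :
    S.toCDVF.Rring (Module.finrank k K) :=
  Ring.inverse
      (algebraMap S.toCDVF.Residue _
        (S.toCDVF.redK (algebraMap k K (Algebra.trace k K (π ^ (-S.depth))))))
    * ∑ j ∈ Finset.range (Module.finrank k K),
        algebraMap S.toCDVF.Residue _
            (S.toCDVF.redK (applyGA k f (π ^ ((j : ℤ) - i)) / π ^ j))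
          * (S.toCDVF.mkX (Module.finrank k K)) ^ j

/-- `ρ(f) = p_{d(f)+d}(f)`. -/
def rhoGA (S : TotallyRamifiedD k K) (π : K) (f : MonoidAlgebra K (K ≃ₐ[k] K)) :
    S.toCDVF.Rring (Module.finrank k K) :=
  pGA k S π (dOfGA k S f + S.depth) f

/-- `B_s = {f ∈ B : d(f) ≡ s mod e₀}`. -/
def BpartGA (S : TotallyRamifiedD k K) (e₀ : ℤ)
    (B : Set (MonoidAlgebra K (K ≃ₐ[k] K))) (s : ℤ) :
    Set (MonoidAlgebra K (K ≃ₐ[k] K)) :=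
  {f | f ∈ B ∧ Int.ModEq e₀ (dOfGA k S f) s}

/-- `B` is graded-independent (relative to the modulus `e₀`): for every `s`
the set `ρ(B_s) ⊆ R` is linearly independent over the residue field. -/
def GradedIndepGA (S : TotallyRamifiedD k K) (π : K) (e₀ : ℤ)
    (B : Set (MonoidAlgebra K (K ≃ₐ[k] K))) : Prop :=
  ∀ s : ℤ, LinearIndependent S.toCDVF.Residue
    (fun g : (rhoGA k S π '' BpartGA k S e₀ B s) =>
      (g : S.toCDVF.Rring (Module.finrank k K)))

/-- The (lower) ramification jump of `σ ∈ G`: `h(σ) = v(σ(π) - π) - 1`. -/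
def rjump (S : CDVF K) (π : K) (σ : K ≃ₐ[k] K) : ℤ :=
  S.v (σ π - π) - 1

/-- The ramification depth of a subextension `L/k` of `K/k`, where `e` is the
ramification index of `K/L`: `D` is the depth of `L/k` iff the trace-dual of
`O_L` equals `𝔪_L^(1-D-[L:k])`. -/
def IsSubDepth (S : CDVF K) (L : IntermediateField k K) (e D : ℤ) : Prop :=
  ∀ x : ↥L,
    (∀ y : ↥L, ((y : K) = 0 ∨ 0 ≤ S.v (y : K)) →
      (Algebra.trace k ↥L (x * y) = 0 ∨
        0 ≤ S.v (algebraMap k K (Algebra.trace k ↥L (x * y))))) ↔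
    ((x : K) = 0 ∨ e * (1 - D - (Module.finrank k ↥L : ℤ)) ≤ S.v (x : K))

end GaloisModules

section Phi

variable (k K : Type) [Field k] [Field K] [Algebra k K]

/-- The isomorphism `φ : K ⊗_k K → K[G]`, `x ⊗ y ↦ x Σ_σ σ(y) σ`. -/
def phiGA [FiniteDimensional k K] :
    K ⊗[k] K →ₗ[k] MonoidAlgebra K (K ≃ₐ[k] K) :=
  TensorProduct.lift
    { toFun := fun x =>
        { toFun := fun y => ∑ σ : K ≃ₐ[k] K, MonoidAlgebra.single σ (x * σ y)
          map_add' := fun y z => by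
            rw [← Finset.sum_add_distrib]
            refine Finset.sum_congr rfl fun σ _ => ?_
            rw [map_add, mul_add, MonoidAlgebra.single_add]
          map_smul' := fun a y => by
            rw [RingHom.id_apply, Finset.smul_sum]
            refine Finset.sum_congr rfl fun σ _ => ?_
            rw [map_smul, MonoidAlgebra.smul_single]
            congr 1
            rw [Algebra.smul_def, Algebra.smul_def]
            ring }
      map_add' := fun x x' => LinearMap.ext fun y => by
        show (∑ σ : K ≃ₐ[k] K, MonoidAlgebra.single σ ((x + x') * σ y)) =
          (∑ σ : K ≃ₐ[k] K, MonoidAlgebra.single σ (x * σ y)) +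
            ∑ σ : K ≃ₐ[k] K, MonoidAlgebra.single σ (x' * σ y)
        rw [← Finset.sum_add_distrib]
        refine Finset.sum_congr rfl fun σ _ => ?_
        rw [add_mul, MonoidAlgebra.single_add]
      map_smul' := fun a x => LinearMap.ext fun y => by
        show (∑ σ : K ≃ₐ[k] K, MonoidAlgebra.single σ ((a • x) * σ y)) =
          a • ∑ σ : K ≃ₐ[k] K, MonoidAlgebra.single σ (x * σ y)
        rw [Finset.smul_sum]
        refine Finset.sum_congr rfl fun σ _ => ?_
        rw [MonoidAlgebra.smul_single]
        congr 1
        rw [Algebra.smul_def, Algebra.smul_def]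
        ring }

/-- Coefficientwise (Hadamard) product on `K[G]`. -/
def hadamardGA (f g : MonoidAlgebra K (K ≃ₐ[k] K)) :
    MonoidAlgebra K (K ≃ₐ[k] K) :=
  MonoidAlgebra.ofCoeff (Finsupp.zipWith (· * ·) (mul_zero 0) f.coeff g.coeff)

/-- The filtration `X_i = Σ_j 𝔪^j ⊗_{O_k} 𝔪^{i-j} ⊆ K ⊗_k K`. -/
def Xfil (S : CDVF K) (i : ℤ) : AddSubgroup (K ⊗[k] K) :=
  AddSubgroup.closure
    {z | ∃ (x y : K) (j : ℤ), (x = 0 ∨ j ≤ S.v x) ∧ (y = 0 ∨ i - j ≤ S.v y) ∧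
      z = x ⊗ₜ[k] y}

/-- The subring `O_K ⊗_{O_k} O_K ⊆ K ⊗_k K` (more precisely, its image). -/
def OOsub (S : CDVF K) : Subring (K ⊗[k] K) :=
  Subring.closure
    {z | ∃ x y : K, (x = 0 ∨ 0 ≤ S.v x) ∧ (y = 0 ∨ 0 ≤ S.v y) ∧ z = x ⊗ₜ[k] y}

/-- The partial (pre)order on `ℤ²` induced by the componentwise order on the
quotient `𝒳 = ℤ²/∼`, where `(a,b) ∼ (a-nc, b+nc)`. -/
def classLE (n : ℤ) (q q' : ℤ × ℤ) : Prop :=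
  ∃ c : ℤ, q.1 ≤ q'.1 + n * c ∧ q.2 ≤ q'.2 - n * c

/-- `α ∈ K ⊗_k K` is diagonal: it can be written as `Σ ε_{ij} π^i ⊗ π^j` with
`ε_{ij}` units of `O_K ⊗_{O_k} O_K`, the classes of the pairs `(i,j)` pairwise
incomparable, and `i + j` constant. -/
def DiagonalT (S : CDVF K) (π : K) (n : ℤ) (α : K ⊗[k] K) : Prop :=
  ∃ (T : Finset (ℤ × ℤ)) (ε : ℤ × ℤ → K ⊗[k] K) (c : ℤ),
    (∀ q ∈ T, ε q ∈ OOsub k K S ∧ ∃ β ∈ OOsub k K S, ε q * β = 1) ∧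
    (∀ q ∈ T, ∀ q' ∈ T, q ≠ q' → ¬classLE n q q' ∧ ¬classLE n q' q) ∧
    (∀ q ∈ T, q.1 + q.2 = c) ∧
    α = ∑ q ∈ T, (ε q) * ((π ^ q.1) ⊗ₜ[k] (π ^ q.2))

/-- The defining properties of the canonical map `r_X : X_0/X_1 → k̄[X]/(X^n-1)`
(viewed as a function on `X_0 ⊆ K ⊗_k K`): it is additive and multiplicative on
`X_0`, unital, kills `X_1`, sends `π ⊗ π⁻¹` to `X` and is `k̄`-linear. -/
def IsRX (S : CDVF K) (n : ℕ) (π : K) (ψ : K ⊗[k] K → S.Rring n) : Prop :=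
  (∀ x y : K ⊗[k] K, x ∈ Xfil k K S 0 → y ∈ Xfil k K S 0 →
    ψ (x + y) = ψ x + ψ y) ∧
  (∀ x y : K ⊗[k] K, x ∈ Xfil k K S 0 → y ∈ Xfil k K S 0 →
    ψ (x * y) = ψ x * ψ y) ∧
  ψ 1 = 1 ∧
  (∀ x ∈ Xfil k K S 1, ψ x = 0) ∧
  ψ (π ⊗ₜ[k] π⁻¹) = S.mkX n ∧
  (∀ c : k, (c = 0 ∨ 0 ≤ S.v (algebraMap k K c)) →
    ψ (algebraMap k K c ⊗ₜ[k] (1 : K)) =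
      algebraMap S.Residue (S.Rring n) (S.redK (algebraMap k K c)))

end Phi

section TensorMapSec

variable (k' k K' K : Type) [Field k'] [Field k] [Field K'] [Field K]
  [Algebra k' k] [Algebra k' K'] [Algebra k K] [Algebra K' K] [Algebra k' K]
  [IsScalarTower k' k K] [IsScalarTower k' K' K]

/-- The natural map `K' ⊗_{k'} K' → K ⊗_k K`, `x ⊗ y ↦ x ⊗ y`. -/
def tensorMap : K' ⊗[k'] K' →+ K ⊗[k] K :=
  TensorProduct.liftAddHom
    { toFun := fun x =>
        { toFun := fun y => algebraMap K' K x ⊗ₜ[k] algebraMap K' K y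
          map_zero' := by simp
          map_add' := by intro y z; simp [map_add, TensorProduct.tmul_add] }
      map_zero' := by
        ext y; simp
      map_add' := by
        intro x z; ext y; simp [map_add, TensorProduct.add_tmul] }
    (by
      intro r m n
      have h : ∀ u : K', algebraMap K' K (r • u) =
          (algebraMap k' k r) • (algebraMap K' K u) := by
        intro u
        rw [Algebra.smul_def, map_mul, Algebra.smul_def]
        congr 1
        rw [← IsScalarTower.algebraMap_apply k' K' K,
          IsScalarTower.algebraMap_apply k' k K]
      simp only [AddMonoidHom.coe_mk, ZeroHom.coe_mk]
      rw [h, h, TensorProduct.smul_tmul])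

end TensorMapSec

section LiftGA

variable {k' K' k K : Type} [Field k'] [Field K'] [Field k] [Field K]
  [Algebra k' K'] [Algebra k K] [Algebra K' K]

/-- Transport of a group-algebra element along a lifting `ι` of Galois
automorphisms and the inclusion of coefficients. -/
def liftGA (ι : (K' ≃ₐ[k'] K') → (K ≃ₐ[k] K))
    (f : MonoidAlgebra K' (K' ≃ₐ[k'] K')) : MonoidAlgebra K (K ≃ₐ[k] K) :=
  f.coeff.sum fun σ a => MonoidAlgebra.single (ι σ) (algebraMap K' K a)

end LiftGA

/-- The setting of an elementary abelian extension of degree `p²`: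
`K = K₁K₂` with `K₁/k`, `K₂/k` of degree `p` with ramification jumps
`h₂ > h₁ > 0`; `σ₁` (resp. `σ₂`) is a nontrivial element of `G` acting
trivially on `K₂` (resp. `K₁`), and `π` is a uniformizer of `K`. -/
structure ZpSetting (p : ℕ) (k K : Type) [Field k] [Field K] [Algebra k K]
    extends TotallyRamifiedD k K where
  π : K
  K₁ : IntermediateField k K
  K₂ : IntermediateField k K
  σ₁ : K ≃ₐ[k] K
  σ₂ : K ≃ₐ[k] K
  h₁ : ℤ
  h₂ : ℤ
  pp : p.Prime
  galois : IsGalois k K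
  rank : Module.finrank k K = p ^ 2
  expP : ∀ σ : K ≃ₐ[k] K, σ ^ p = 1
  rank₁ : Module.finrank k ↥K₁ = p
  rank₂ : Module.finrank k ↥K₂ = p
  normal₁ : Normal k ↥K₁
  normal₂ : Normal k ↥K₂
  compositum : K₁ ⊔ K₂ = ⊤
  σ₁_ne : σ₁ ≠ 1
  σ₂_ne : σ₂ ≠ 1
  σ₁_fix : ∀ x : K, x ∈ K₂ → σ₁ x = x
  σ₂_fix : ∀ x : K, x ∈ K₁ → σ₂ x = x
  h₁_pos : 0 < h₁
  h_lt : h₁ < h₂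
  π_ne : π ≠ 0
  π_uni : toCDVF.v π = 1
  exists_uni₁ : ∃ x : K, x ∈ K₁ ∧ x ≠ 0 ∧ toCDVF.v x = (p : ℤ)
  exists_uni₂ : ∃ x : K, x ∈ K₂ ∧ x ≠ 0 ∧ toCDVF.v x = (p : ℤ)
  jump₁ : ∀ x : K, x ∈ K₁ → x ≠ 0 → toCDVF.v x = (p : ℤ) →
    toCDVF.v (σ₁ x - x) = (p : ℤ) * (h₁ + 1)
  jump₂ : ∀ x : K, x ∈ K₂ → x ≠ 0 → toCDVF.v x = (p : ℤ) →
    toCDVF.v (σ₂ x - x) = (p : ℤ) * (h₂ + 1)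

/-- The element `f_{ij} = (σ₁ - 1)^i (σ₂ - 1)^j ∈ k[G] ⊆ K[G]`. -/
def fijGA {p : ℕ} {k K : Type} [Field k] [Field K] [Algebra k K]
    (Z : ZpSetting p k K) (i j : ℕ) : MonoidAlgebra K (K ≃ₐ[k] K) :=
  (MonoidAlgebra.single Z.σ₁ (1 : K) - 1) ^ i *
    (MonoidAlgebra.single Z.σ₂ (1 : K) - 1) ^ j

/-- The piecewise linear function `H(i,j)`. -/
def Hfun (p : ℕ) (h₁ h₂ d : ℤ) (i j : ℕ) : ℤ :=
  if (i : ℤ) + (j : ℤ) < (p : ℤ) - 1 then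
    h₁ * i + ((p : ℤ) * h₂ - ((p : ℤ) - 1) * h₁) * j - d
  else ((p : ℤ) * i - ((p : ℤ) - 1) ^ 2) * h₁ + (p : ℤ) * h₂ * j

/-- The element `P(i,j) ∈ R = k̄[X]/(X^n - 1)`. -/
def Pel {K : Type} [Field K] (S : CDVF K) (n p : ℕ) (h₁ h₂ : ℤ) (i j : ℕ) :
    S.Rring n :=
  if (i : ℤ) + (j : ℤ) < (p : ℤ) - 1 then
    ((S.mkX n) ^ h₁.toNat - 1) ^ (n - (i + j) - 1)
  else
    (∑ s ∈ Finset.range p,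
        ((∏ l ∈ Finset.range i, ((s : ℤ) - ((l : ℤ) + 1) * h₁) : ℤ) : S.Rring n)
          * (S.mkX n) ^ (p * s)) *
    (∑ t ∈ Finset.range p,
        ((∏ l ∈ Finset.range j, ((t : ℤ) - ((l : ℤ) + 1) * h₂) : ℤ) : S.Rring n)
          * (S.mkX n) ^ (p * t))

end

section Statement13Aux

variable {k K' K : Type} [Field k] [Field K'] [Field K]
    [Algebra k K'] [Algebra k K] [Algebra K' K] [IsScalarTower k K' K]

lemma applyGA_eq_sum [FiniteDimensional k K] (f : MonoidAlgebra K (K ≃ₐ[k] K)) (z : K) :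
    applyGA k f z = ∑ σ : K ≃ₐ[k] K, f.coeff σ * σ z :=
  Finsupp.sum_fintype _ _ fun _ => zero_mul _

lemma applyGA_add' [FiniteDimensional k K] (f g : MonoidAlgebra K (K ≃ₐ[k] K)) (z : K) :
    applyGA k (f + g) z = applyGA k f z + applyGA k g z := by
  rw [applyGA_eq_sum, applyGA_eq_sum, applyGA_eq_sum, ← Finset.sum_add_distrib]
  exact Finset.sum_congr rfl fun σ _ => by rw [MonoidAlgebra.coeff_add, Finsupp.add_apply, add_mul]

lemma phiGA_tmul [FiniteDimensional k K] (x y : K) :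
    phiGA k K (x ⊗ₜ[k] y) = ∑ σ : K ≃ₐ[k] K, MonoidAlgebra.single σ (x * σ y) := by
  simp [phiGA]

lemma applyGA_phiGA_tmul [FiniteDimensional k K] (x y z : K) :
    applyGA k (phiGA k K (x ⊗ₜ[k] y)) z = ∑ σ : K ≃ₐ[k] K, (x * σ y) * σ z := by
  rw [applyGA_eq_sum, phiGA_tmul]
  refine Finset.sum_congr rfl fun τ _ => ?_
  congr 1
  rw [MonoidAlgebra.coeff_sum, Finset.sum_apply', Finset.sum_eq_single τ]
  · exact Finsupp.single_eq_same
  · intro σ _ hστ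
    exact Finsupp.single_eq_of_ne' hστ
  · intro h
    exact absurd (Finset.mem_univ τ) h

open Classical in
/-- Turn a `k`-automorphism of `K` fixing `K'` into a `K'`-automorphism (junk
value `1` otherwise). -/
noncomputable def toRelAut (σ : K ≃ₐ[k] K) : K ≃ₐ[K'] K :=
  if h : ∀ x : K', σ (algebraMap K' K x) = algebraMap K' K x
  then AlgEquiv.ofRingEquiv (f := σ.toRingEquiv) h else 1

lemma fiber_sum [FiniteDimensional k K] [IsGalois k K]
    [FiniteDimensional k K'] [IsGalois k K']
    [DecidableEq (K' ≃ₐ[k] K')] (τ : K' ≃ₐ[k] K') (z : K) :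
    ∑ σ ∈ Finset.univ.filter
        (fun σ : K ≃ₐ[k] K => AlgEquiv.restrictNormalHom K' σ = τ), σ z
      = algebraMap K' K (τ (Algebra.trace K' K z)) := by
  haveI : FiniteDimensional K' K := FiniteDimensional.right k K' K
  haveI : IsGalois K' K := IsGalois.tower_top_of_isGalois k K' K
  obtain ⟨σ₀, hσ₀⟩ := AlgEquiv.restrictNormalHom_surjective (K₁ := K') (E := K) τ
  have hres : ∀ σ : K ≃ₐ[k] K, ∀ x : K',
      algebraMap K' K (AlgEquiv.restrictNormalHom K' σ x) = σ (algebraMap K' K x) :=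
    fun σ x => AlgEquiv.restrictNormal_commutes σ K' x
  have h1 : algebraMap K' K (τ (Algebra.trace K' K z))
      = σ₀ (algebraMap K' K (Algebra.trace K' K z)) := by
    rw [← hσ₀]; exact hres σ₀ _
  rw [h1, trace_eq_sum_automorphisms z, map_sum]
  have hfix : ∀ σ ∈ Finset.univ.filter
      (fun σ : K ≃ₐ[k] K => AlgEquiv.restrictNormalHom K' σ = τ),
      ∀ x : K', (σ₀⁻¹ * σ) (algebraMap K' K x) = algebraMap K' K x := by
    intro σ hσ x
    rw [Finset.mem_filter] at hσ
    have h2 : σ (algebraMap K' K x) = algebraMap K' K (τ x) := by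
      rw [← hσ.2]; exact (hres σ x).symm
    have h3 : σ₀ (algebraMap K' K x) = algebraMap K' K (τ x) := by
      rw [← hσ₀]; exact (hres σ₀ x).symm
    show σ₀⁻¹ (σ (algebraMap K' K x)) = algebraMap K' K x
    rw [h2, ← h3]
    exact σ₀.symm_apply_apply _
  refine (Finset.sum_nbij'
    (i := fun h : K ≃ₐ[K'] K => σ₀ * AlgEquiv.restrictScalars k h)
    (j := fun σ : K ≃ₐ[k] K => toRelAut (σ₀⁻¹ * σ)) ?_ ?_ ?_ ?_ ?_).symm
  · intro h _
    rw [Finset.mem_filter]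
    refine ⟨Finset.mem_univ _, ?_⟩
    rw [map_mul, hσ₀]
    have : AlgEquiv.restrictNormalHom K' (AlgEquiv.restrictScalars k h) = 1 := by
      apply AlgEquiv.ext
      intro x
      apply (algebraMap K' K).injective
      rw [hres]
      show h (algebraMap K' K x) = algebraMap K' K ((1 : K' ≃ₐ[k] K') x)
      rw [h.commutes]; rfl
    rw [this, mul_one]
  · intro σ _; exact Finset.mem_univ _
  · intro h _
    rw [inv_mul_cancel_left, toRelAut,
      dif_pos (show ∀ x : K', (AlgEquiv.restrictScalars k h) (algebraMap K' K x)
        = algebraMap K' K x from fun x => h.commutes x)]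
    apply AlgEquiv.ext; intro x; rfl
  · intro σ hσ
    rw [toRelAut, dif_pos (hfix σ hσ)]
    apply AlgEquiv.ext; intro x
    show σ₀ ((σ₀⁻¹ * σ) x) = σ x
    show σ₀ (σ₀⁻¹ (σ x)) = σ x
    exact σ₀.apply_symm_apply _
  · intro h _; rfl

lemma statement13_key [FiniteDimensional k K] [IsGalois k K]
    [FiniteDimensional k K'] [IsGalois k K'] (x y : K') (z : K) :
    applyGA k (phiGA k K (algebraMap K' K x ⊗ₜ[k] algebraMap K' K y)) z =
      algebraMap K' K (applyGA k (phiGA k K' (x ⊗ₜ[k] y)) (Algebra.trace K' K z)) := by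
  classical
  have hres : ∀ σ : K ≃ₐ[k] K, ∀ w : K',
      algebraMap K' K (AlgEquiv.restrictNormalHom K' σ w) = σ (algebraMap K' K w) :=
    fun σ w => AlgEquiv.restrictNormal_commutes σ K' w
  rw [applyGA_phiGA_tmul, applyGA_phiGA_tmul, map_sum,
    ← Finset.sum_fiberwise Finset.univ (AlgEquiv.restrictNormalHom (F := k) K')
      (fun σ : K ≃ₐ[k] K =>
        (algebraMap K' K x * σ (algebraMap K' K y)) * σ z)]
  refine Finset.sum_congr rfl fun τ _ => ?_
  have step : ∀ σ ∈ Finset.univ.filter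
      (fun σ : K ≃ₐ[k] K => AlgEquiv.restrictNormalHom K' σ = τ),
      (algebraMap K' K x * σ (algebraMap K' K y)) * σ z
        = (algebraMap K' K x * algebraMap K' K (τ y)) * σ z := by
    intro σ hσ
    rw [Finset.mem_filter] at hσ
    rw [← hσ.2, hres]
  rw [Finset.sum_congr rfl step, ← Finset.mul_sum, map_mul, map_mul]
  congr 1
  convert fiber_sum τ z using 2

end Statement13Aux

/-- If `K'/k` is a Galois subextension of `K/k` and `α'` maps
to `α` under the natural map `K' ⊗_k K' → K ⊗_k K`, then
`φ(α) = φ^{K'/k}(α') ∘ tr_{K/K'}` as maps `K → K`. -/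
theorem statement13 {k K' K : Type} [Field k] [Field K'] [Field K]
    [Algebra k K'] [Algebra k K] [Algebra K' K] [IsScalarTower k K' K]
    [FiniteDimensional k K] [IsGalois k K]
    [FiniteDimensional k K'] [IsGalois k K']
    (S : TotallyRamified k K) :
    ∀ (α' : K' ⊗[k] K') (z : K),
      applyGA k (phiGA k K (tensorMap k k K' K α')) z =
        algebraMap K' K (applyGA k (phiGA k K' α') (Algebra.trace K' K z)) := by
  intro α' z
  induction α' using TensorProduct.induction_on with
  | zero => simp [applyGA]
  | tmul x y =>
      have h : tensorMap k k K' K (x ⊗ₜ[k] y)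
          = algebraMap K' K x ⊗ₜ[k] algebraMap K' K y := by
        simp [tensorMap]
      rw [h]
      exact statement13_key x y z
  | add a b ha hb =>
      rw [map_add, map_add, applyGA_add', ha, hb, map_add, applyGA_add', map_add]
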